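/- Let ρ be a unitary matrix representation of a finite group G of dimension n. For a nonempty finite subset T ⊆ G define the partial averaging operator Σ_{ρ,T}[X] = (1/|T|) Σ_{t ∈ T} ρ_t X (ρ_t)⁻¹ on n×n complex matrices. Suppose T_1, …, T_ν are nonempty subsets of G such that every g ∈ G has a unique decomposition g = t_ν ⋯ t_1 with t_i ∈ T_i (i.e. the product map T_ν × ⋯ × T_1 → G, (t_ν, …, t_1) ↦ t_ν ⋯ t_1, is a bijection). Then for every n×n complex matrix X, Σ_{ρ,T_ν}[Σ_{ρ,T_{ν−1}}[⋯ Σ_{ρ,T_1}[X]]] = (1/|G|) Σ_{g ∈ G} ρ_g X (ρ_g)⁻¹. -/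

import Mathlib

/-!
Conjugation `X ↦ ρ_g X ρ_g⁻¹` is a linear representation of `G`, so the composite of the partial
averages is `(∏ |T_i|)⁻¹` times the sum of the conjugations by all products `t_ν ⋯ t_1` with
`t_i ∈ T_i`. Unique factorization says that these products run through `G` exactly once, which
turns the sum into the sum over `G` and gives `∏ |T_i| = |G|`.
-/

open Matrix

open Finset Fintype

theorem Fin.sum_piFinset_succ {α M : Type*} [DecidableEq α] [AddCommMonoid M] {ν : ℕ}
    (S : Fin (ν + 1) → Finset α) (f : (Fin (ν + 1) → α) → M) :
    ∑ t ∈ piFinset S, f t = ∑ x ∈ S 0, ∑ t ∈ piFinset (Fin.tail S), f (Fin.cons x t) := by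
  have h := filter_piFinset_eq_map_consEquiv S fun _ => True
  simp only [filter_true] at h
  rw [h, sum_map, sum_product]
  rfl

theorem Fintype.sum_piFinset_comp_of_bijective {ι α β M : Type*} [Fintype ι] [DecidableEq ι]
    [DecidableEq α] [Fintype β] [AddCommMonoid M] {s : ι → Finset α} {P : (ι → α) → β}
    (hP : Function.Bijective fun t : {t : ι → α // ∀ i, t i ∈ s i} => P t.1) (f : β → M) :
    ∑ t ∈ piFinset s, f (P t) = ∑ b, f b := by
  let _ : Fintype {t : ι → α // ∀ i, t i ∈ s i} :=
    Fintype.ofFinset (piFinset s) fun _ => mem_piFinset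
  rw [sum_subtype (piFinset s) fun _ => mem_piFinset]
  exact (Equiv.ofBijective _ hP).sum_comp f

theorem Fintype.prod_card_eq_card_of_bijective {ι α β : Type*} [Fintype ι] [DecidableEq ι]
    [DecidableEq α] [Fintype β] {s : ι → Finset α} {P : (ι → α) → β}
    (hP : Function.Bijective fun t : {t : ι → α // ∀ i, t i ∈ s i} => P t.1) :
    ∏ i, #(s i) = Fintype.card β := by
  simpa only [sum_const, card_piFinset, smul_eq_mul, mul_one, Finset.card_univ] using
    sum_piFinset_comp_of_bijective hP fun _ => (1 : ℕ)

theorem List.prod_ofFn_rev_cons {G : Type*} [Monoid G] {ν : ℕ} (x : G) (t : Fin ν → G) :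
    (List.ofFn fun i : Fin (ν + 1) => (Fin.cons x t : Fin (ν + 1) → G) i.rev).prod
      = (List.ofFn fun i : Fin ν => t i.rev).prod * x := by
  rw [List.ofFn_succ']
  simp [Fin.rev_castSucc, List.concat_eq_append]

namespace Representation

variable {k G V : Type*} [Semifield k] [Monoid G] [AddCommMonoid V] [Module k V]

def partialAverage (σ : Representation k G V) (S : Finset G) (v : V) : V :=
  (#S : k)⁻¹ • ∑ t ∈ S, σ t v

theorem foldl_partialAverage [DecidableEq G] (σ : Representation k G V) {ν : ℕ}
    (T : Fin ν → Finset G) (v : V) :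
    (List.finRange ν).foldl (fun w i => σ.partialAverage (T i) w) v
      = (∏ i, (#(T i) : k))⁻¹ • ∑ t ∈ piFinset T, σ (List.ofFn fun i => t i.rev).prod v := by
  induction ν generalizing v with
  | zero => simp
  | succ ν ih =>
    rw [List.finRange_succ, List.foldl_cons, List.foldl_map]
    refine (ih (Fin.tail T) _).trans ?_
    rw [partialAverage, Fin.sum_piFinset_succ, Fin.prod_univ_succ, mul_inv, mul_comm, mul_smul,
      sum_comm]
    simp only [List.prod_ofFn_rev_cons, map_mul, Module.End.mul_apply, map_smul, map_sum,
      smul_sum]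
    rfl

end Representation

def unitaryConjRepresentation {k A G : Type*} [CommSemiring k] [Semiring A] [Algebra k A]
    [StarMul A] [Monoid G] (ρ : G →* unitary A) : Representation k G A where
  toFun g := LinearMap.mulRight k (star (ρ g : A)) ∘ₗ LinearMap.mulLeft k (ρ g : A)
  map_one' := by ext; simp
  map_mul' g h := by ext; simp [mul_assoc]

theorem iterated_partial_average_eq_group_average_general
    {G : Type*} [Group G] [Fintype G] {n ν : ℕ}
    (ρ : G →* Matrix.unitaryGroup (Fin n) ℂ)
    (T : Fin ν → Finset G)
    (pavg : Finset G → Matrix (Fin n) (Fin n) ℂ → Matrix (Fin n) (Fin n) ℂ)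
    (hpavg : ∀ (S : Finset G) (X : Matrix (Fin n) (Fin n) ℂ),
      pavg S X = (S.card : ℂ)⁻¹ •
        ∑ t ∈ S, (ρ t : Matrix (Fin n) (Fin n) ℂ) * X * ((ρ t)⁻¹ : Matrix (Fin n) (Fin n) ℂ))
    (hbij : Function.Bijective
      (fun t : {t : Fin ν → G // ∀ i, t i ∈ T i} =>
        (List.ofFn fun i : Fin ν => t.1 i.rev).prod))
    (X : Matrix (Fin n) (Fin n) ℂ) :
    (List.finRange ν).foldl (fun Y i => pavg (T i) Y) X
      = (Fintype.card G : ℂ)⁻¹ •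
        ∑ g : G, (ρ g : Matrix (Fin n) (Fin n) ℂ) * X * ((ρ g)⁻¹ : Matrix (Fin n) (Fin n) ℂ) := by
  classical
  set σ := unitaryConjRepresentation (k := ℂ) ρ
  -- `((ρ g)⁻¹ : Matrix _ _ ℂ)` elaborates to `Matrix.inv`, not to the group inverse `star (ρ g)`.
  have hσ (g : G) (Y : Matrix (Fin n) (Fin n) ℂ) :
      σ g Y = (ρ g : Matrix (Fin n) (Fin n) ℂ) * Y * ((ρ g)⁻¹ : Matrix (Fin n) (Fin n) ℂ) := by
    rw [Matrix.inv_eq_left_inv (Matrix.UnitaryGroup.star_mul_self _)]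
    rfl
  have hpavg_eq : pavg = σ.partialAverage := by
    funext S Y
    rw [hpavg, Representation.partialAverage]
    simp only [hσ]
  simp only [hpavg_eq, Representation.foldl_partialAverage, ← hσ]
  rw [sum_piFinset_comp_of_bijective hbij fun g => σ g X,
    ← prod_card_eq_card_of_bijective (P := fun t => (List.ofFn fun i => t i.rev).prod) hbij,
    Nat.cast_prod]

/-- for a unitary representation `ρ` of a finite group `G` and nonempty subsets
`T 0, …, T (ν-1)` of `G` (representing `T_1, …, T_ν`) such that the product map
`(t_ν, …, t_1) ↦ t_ν ⋯ t_1` is a bijection onto `G`, the composition of the partial averaging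
operators `Σ_{ρ,T}[X] = (1/|T|) ∑_{t ∈ T} ρ t * X * (ρ t)⁻¹` (innermost `T_1`, outermost `T_ν`)
equals the full group average `(1/|G|) ∑ g, ρ g * X * (ρ g)⁻¹`. -/
theorem iterated_partial_average_eq_group_average
    {G : Type*} [Group G] [Fintype G] {n ν : ℕ}
    (ρ : G →* Matrix.unitaryGroup (Fin n) ℂ)
    (T : Fin ν → Finset G)
    (hT : ∀ i, (T i).Nonempty)
    (pavg : Finset G → Matrix (Fin n) (Fin n) ℂ → Matrix (Fin n) (Fin n) ℂ)
    (hpavg : ∀ (S : Finset G) (X : Matrix (Fin n) (Fin n) ℂ),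
      pavg S X = (S.card : ℂ)⁻¹ •
        ∑ t ∈ S, (ρ t : Matrix (Fin n) (Fin n) ℂ) * X * ((ρ t)⁻¹ : Matrix (Fin n) (Fin n) ℂ))
    (hbij : Function.Bijective
      (fun t : {t : Fin ν → G // ∀ i, t i ∈ T i} =>
        (List.ofFn fun i : Fin ν => t.1 i.rev).prod))
    (X : Matrix (Fin n) (Fin n) ℂ) :
    (List.finRange ν).foldl (fun Y i => pavg (T i) Y) X
      = (Fintype.card G : ℂ)⁻¹ •
        ∑ g : G, (ρ g : Matrix (Fin n) (Fin n) ℂ) * X * ((ρ g)⁻¹ : Matrix (Fin n) (Fin n) ℂ) :=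
  iterated_partial_average_eq_group_average_general ρ T pavg hpavg hbij X
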